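/- Let G be a nilpotent group of nilpotency class at most 2 and let Y be a subgroup of G whose normalizer N_G(Y) has finite index in G. Then there exist a positive integer n and a normal subgroup Ȳ of G such that Yⁿ ≤ Ȳ ≤ Y, where Yⁿ denotes the subgroup of Y generated by {yⁿ : y ∈ Y}. -/

import Mathlib

universe u v w

/-- A field is finitely generated (over its prime subfield). -/
def IsFGField (k : Type*) [Field k] : Prop :=
  ∃ s : Finset k, Subfield.closure (s : Set k) = ⊤

/-- The subgroup of elements of `p`-power order in an abelian group. -/
def primaryPart (A : Type*) [CommGroup A] (p : ℕ) : Subgroup A where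
  carrier := {x | ∃ n : ℕ, x ^ p ^ n = 1}
  one_mem' := ⟨0, one_pow _⟩
  mul_mem' := by
    rintro a b ⟨n, hn⟩ ⟨m, hm⟩
    refine ⟨n + m, ?_⟩
    rw [mul_pow, pow_add, pow_mul, hn, one_pow, one_mul, Nat.mul_comm, pow_mul, hm, one_pow]
  inv_mem' := by
    rintro a ⟨n, hn⟩
    exact ⟨n, by rw [inv_pow, hn, inv_one]⟩

/-- A group has finite Prüfer rank: there is `m` such that every finitely generated
subgroup can be generated by at most `m` elements. -/
def HasFinitePruferRank (G : Type*) [Group G] : Prop :=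
  ∃ m : ℕ, ∀ H : Subgroup G, H.FG →
    ∃ s : Finset G, ↑s ⊆ (H : Set G) ∧ s.card ≤ m ∧ Subgroup.closure (s : Set G) = H

/-- An abelian group has finite total rank. -/
def FiniteTotalRank (A : Type*) [CommGroup A] : Prop :=
  HasFinitePruferRank (A ⧸ CommGroup.torsion A) ∧
  {p : ℕ | p.Prime ∧ primaryPart A p ≠ ⊥}.Finite ∧
  ∀ p : ℕ, p.Prime → HasFinitePruferRank (primaryPart A p)

/-- `G` has an infinite `p`-section: subgroups `K ⊴ H ≤ G` with `H/K` an infinite `p`-group. -/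
def HasInfinitePSection (G : Type*) [Group G] (p : ℕ) : Prop :=
  ∃ (H : Subgroup G) (K : Subgroup ↥H) (_ : K.Normal),
    Infinite (↥H ⧸ K) ∧ ∀ x : ↥H ⧸ K, ∃ n : ℕ, x ^ p ^ n = 1

/-- `char k ∉ Sp(G)`: the characteristic of `k` is zero or a prime `p` such that `G`
has no infinite `p`-section. -/
def CharNotInSp (k : Type*) [Field k] (G : Type*) [Group G] : Prop :=
  ∀ p : ℕ, p.Prime → ringChar k = p → ¬ HasInfinitePSection G p

/-- A quasicyclic (Prüfer) group: an infinite locally cyclic `p`-group for some prime `p`. -/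
def IsQuasicyclic (Q : Type*) [Group Q] : Prop :=
  Infinite Q ∧ ∃ p : ℕ, p.Prime ∧ (∀ x : Q, ∃ n : ℕ, x ^ p ^ n = 1) ∧
    ∀ s : Finset Q, ∃ g : Q, Subgroup.closure (s : Set Q) = Subgroup.zpowers g

/-- A minimax group: it has a finite chain `⊥ = c 0 ≤ ⋯ ≤ c n = ⊤` of subgroups, each
normal in the next, all whose factors are cyclic or quasicyclic. -/
def IsMinimax (G : Type u) [Group G] : Prop :=
  ∃ (n : ℕ) (c : Fin (n + 1) → Subgroup G), c 0 = ⊥ ∧ c (Fin.last n) = ⊤ ∧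
    (∀ i : Fin n, c i.castSucc ≤ c i.succ) ∧
    ∀ i : Fin n, ∃ (A : Type u) (_ : Group A) (f : ↥(c i.succ) →* A),
      Function.Surjective f ∧ f.ker = (c i.castSucc).subgroupOf (c i.succ) ∧
      (IsCyclic A ∨ IsQuasicyclic A)

/-- A soluble FATR-group: it has a finite chain `⊥ = c 0 ≤ ⋯ ≤ c n = ⊤` of subgroups, each
normal in the next, all whose factors are abelian of finite total rank. -/
def IsFATRGroup (G : Type u) [Group G] : Prop :=
  ∃ (n : ℕ) (c : Fin (n + 1) → Subgroup G), c 0 = ⊥ ∧ c (Fin.last n) = ⊤ ∧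
    (∀ i : Fin n, c i.castSucc ≤ c i.succ) ∧
    ∀ i : Fin n, ∃ (A : Type u) (_ : CommGroup A) (f : ↥(c i.succ) →* A),
      Function.Surjective f ∧ f.ker = (c i.castSucc).subgroupOf (c i.succ) ∧
      FiniteTotalRank A

/-- Multiplication by a group element as a `k`-linear map on a `kG`-module. -/
noncomputable def gSmul (k : Type*) [Field k] {G : Type*} [Group G] (M : Type*) [AddCommGroup M]
    [Module (MonoidAlgebra k G) M] [Module k M] [IsScalarTower k (MonoidAlgebra k G) M]
    (g : G) : M →ₗ[k] M where
  toFun m := MonoidAlgebra.of k G g • m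
  map_add' x y := smul_add _ x y
  map_smul' c m := by
    simp only [RingHom.id_apply]
    rw [← algebraMap_smul (MonoidAlgebra k G) c m, ← mul_smul,
      ← Algebra.commutes c (MonoidAlgebra.of k G g), mul_smul, algebraMap_smul]

/-- `V` (a `kN`-invariant subspace of `M`) is induced from the `kH`-subspace `W`, where
`H ≤ N`: `V` is the internal direct sum `⊕_{t ∈ T} t • W` over a transversal `T ⊆ N`
of `H` in `N`. -/
def IsInducedFromSub (k : Type*) [Field k] {G : Type*} [Group G] (M : Type*) [AddCommGroup M]
    [Module (MonoidAlgebra k G) M] [Module k M] [IsScalarTower k (MonoidAlgebra k G) M]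
    (N : Subgroup G) (V : Submodule k M) (H : Subgroup G) (W : Submodule k M) : Prop :=
  H ≤ N ∧ W ≤ V ∧
  (∀ h ∈ H, ∀ w ∈ W, MonoidAlgebra.of k G h • w ∈ W) ∧
  ∃ T : Set G, T ⊆ (N : Set G) ∧
    (∀ g ∈ N, ∃! t, t ∈ T ∧ t⁻¹ * g ∈ H) ∧
    iSupIndep (fun t : T => W.map (gSmul k M (t : G))) ∧
    (⨆ t : T, W.map (gSmul k M (t : G))) = V

/-- The `kG`-module `M` is induced from the `kH`-subspace `U`. -/
def IsInducedFrom (k : Type*) [Field k] {G : Type*} [Group G] (M : Type*) [AddCommGroup M]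
    [Module (MonoidAlgebra k G) M] [Module k M] [IsScalarTower k (MonoidAlgebra k G) M]
    (H : Subgroup G) (U : Submodule k M) : Prop :=
  IsInducedFromSub k M ⊤ ⊤ H U

/-- The kernel of the action of a subgroup `N` on a subspace `V` of a `kG`-module. -/
noncomputable def moduleKer (k : Type*) [Field k] {G : Type*} [Group G] (M : Type*)
    [AddCommGroup M] [Module (MonoidAlgebra k G) M] [Module k M]
    [IsScalarTower k (MonoidAlgebra k G) M]
    (N : Subgroup G) (V : Submodule k M) : Subgroup N where
  carrier := {g | ∀ v ∈ V, MonoidAlgebra.of k G (g : G) • v = v}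
  one_mem' := by
    intro v _
    show MonoidAlgebra.of k G ((1 : N) : G) • v = v
    rw [OneMemClass.coe_one, map_one, one_smul]
  mul_mem' := by
    intro a b ha hb v hv
    show MonoidAlgebra.of k G ((a * b : N) : G) • v = v
    have : ((a * b : N) : G) = (a : G) * (b : G) := rfl
    rw [this, map_mul, mul_smul, hb v hv, ha v hv]
  inv_mem' := by
    intro a ha v hv
    show MonoidAlgebra.of k G ((a⁻¹ : N) : G) • v = v
    have h1 : MonoidAlgebra.of k G ((a : G)⁻¹ * (a : G)) • v = v := by
      rw [inv_mul_cancel, map_one, one_smul]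
    rw [map_mul, mul_smul, ha v hv] at h1
    exact h1

/-!
In a group of class at most 2 the commutator `⁅g, y⁆` is central and bilinear, so
`⁅g, y ^ m⁆ = ⁅g, y⁆ ^ m = ⁅g ^ m, y⁆`. For fixed `y ∈ Y` the elements `g` with `⁅g, y⁆ ∈ Y` form
the preimage of a subgroup of the abelian group `Z(G)` under `g ↦ ⁅g, y⁆`, hence a normal
subgroup containing `N_G(Y)`; so it contains `g ^ m` for `m = |G : N_G(Y)|`. Therefore every
conjugate `g y ^ m g⁻¹ = ⁅g, y ^ m⁆ y ^ m` lies in `Y`, i.e. `y ^ m` lies in the normal core of `Y`,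
which is the required `Ȳ`.
-/

open scoped commutatorElement

section ClassTwo

open Subgroup

variable {G : Type*} [Group G]

theorem Subgroup.pow_index_mem_of_le {H K : Subgroup G} [K.Normal] (h : H ≤ K) (g : G) :
    g ^ H.index ∈ K := by
  obtain ⟨c, hc⟩ := index_dvd_of_le h
  rw [hc, pow_mul]
  exact pow_mem (pow_index_mem K g) c

theorem commutatorElement_mem_center (hG : commutator G ≤ center G) (a b : G) :
    ⁅a, b⁆ ∈ center G :=
  hG (commutator_mem_commutator (mem_top a) (mem_top b))

theorem commutatorElement_mul_left_of_le_center (hG : commutator G ≤ center G) (a b c : G) :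
    ⁅a * b, c⁆ = ⁅a, c⁆ * ⁅b, c⁆ := by
  rw [commutatorElement_mul_left_eq_conj_mul,
    mem_center_iff.mp (commutatorElement_mem_center hG b c) a, mul_inv_cancel_right]
  exact (mem_center_iff.mp (commutatorElement_mem_center hG b c) _).symm

theorem commutatorElement_mul_right_of_le_center (hG : commutator G ≤ center G) (a b c : G) :
    ⁅a, b * c⁆ = ⁅a, b⁆ * ⁅a, c⁆ := by
  rw [commutatorElement_mul_right_eq_mul_conj, mul_assoc _ b,
    mem_center_iff.mp (commutatorElement_mem_center hG a c) b, ← mul_assoc, mul_inv_cancel_right]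

def commutatorLeftHom (hG : commutator G ≤ center G) (y : G) : G →* center G where
  toFun g := ⟨⁅g, y⁆, commutatorElement_mem_center hG g y⟩
  map_one' := Subtype.ext (commutatorElement_one_left y)
  map_mul' a b := Subtype.ext (commutatorElement_mul_left_of_le_center hG a b y)

def commutatorRightHom (hG : commutator G ≤ center G) (g : G) : G →* center G where
  toFun y := ⟨⁅g, y⁆, commutatorElement_mem_center hG g y⟩
  map_one' := Subtype.ext (commutatorElement_one_right g)
  map_mul' a b := Subtype.ext (commutatorElement_mul_right_of_le_center hG g a b)

theorem commutatorElement_pow_left_of_le_center (hG : commutator G ≤ center G) (a b : G) (n : ℕ) :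
    ⁅a ^ n, b⁆ = ⁅a, b⁆ ^ n :=
  congrArg Subtype.val (map_pow (commutatorLeftHom hG b) a n)

theorem commutatorElement_pow_right_of_le_center (hG : commutator G ≤ center G) (a b : G) (n : ℕ) :
    ⁅a, b ^ n⁆ = ⁅a, b⁆ ^ n :=
  congrArg Subtype.val (map_pow (commutatorRightHom hG a) b n)

theorem pow_index_normalizer_mem_normalCore (hG : commutator G ≤ center G) {Y : Subgroup G}
    {y : G} (hy : y ∈ Y) : y ^ (normalizer (Y : Set G)).index ∈ Y.normalCore := by
  set m := (normalizer (Y : Set G)).index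
  intro g
  let K := (Y.subgroupOf (center G)).comap (commutatorLeftHom hG y)
  have hNK : normalizer (Y : Set G) ≤ K := fun x hx =>
    Y.mul_mem ((mem_normalizer_iff.mp hx y).mp hy) (Y.inv_mem hy)
  have hgm : ⁅g ^ m, y⁆ ∈ Y := pow_index_mem_of_le hNK g
  rw [commutatorElement_pow_left_of_le_center hG,
    ← commutatorElement_pow_right_of_le_center hG] at hgm
  rw [← MulAut.conj_apply, conj_eq_commutatorElement_mul]
  exact Y.mul_mem hgm (Y.pow_mem hy m)

end ClassTwo

theorem stmt_19 (G : Type*) [Group G]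
    (hnil : commutator G ≤ Subgroup.center G)
    (Y : Subgroup G) (hfi : (Subgroup.normalizer (Y : Set G)).index ≠ 0) :
    ∃ n : ℕ, 0 < n ∧ ∃ Ybar : Subgroup G, Ybar.Normal ∧
      Subgroup.closure ((· ^ n) '' (Y : Set G)) ≤ Ybar ∧ Ybar ≤ Y := by
  refine ⟨_, Nat.pos_of_ne_zero hfi, Y.normalCore, Y.normalCore_normal, ?_, Y.normalCore_le⟩
  rw [Subgroup.closure_le]
  rintro _ ⟨y, hy, rfl⟩
  exact pow_index_normalizer_mem_normalCore hnil hy
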